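/- Let s ∈ (0,1) and α ∈ [s, 1+s). Let Ω ⊂ ℝⁿ be a convex open set with B_R(p) ⊆ Ω for some p ∈ ℝⁿ, R > 0, and let ω ∈ S^{n−1}. Then ∫_R^∞ χ_Ω(p+ρω) / (d(p+ρω)^{α−s} ρ^{1+2s}) dρ ≤ C R^{−s−α}, with C depending only on α, n, s. -/

import Mathlib

/-!
Let `ρ₀` be the parameter at which the ray `ρ ↦ p + ρ • ω` leaves `Ω`. By convexity `Ω` contains
the cone spanned by `B_R(p)` and any of its points, so `d(p + ρ • ω) ≥ R (1 - ρ / ρ₀)` for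
`0 ≤ ρ < ρ₀`. Hence `d ≥ R / 2` up to `ρ₀ / 2`, where the integrand is at most
`(R/2)^(s-α) ρ^(-1-2s)`, while on `(ρ₀ / 2, ρ₀)` it is at most
`(R (1 - ρ / ρ₀))^(s-α) (ρ₀/2)^(-1-2s)`, which is integrable because `α - s < 1`. Since `ρ₀ ≥ R`,
both pieces integrate to a multiple of `R^(-s-α)`. If the ray never leaves `Ω`, then `d ≥ R`
along all of it.
-/

open Metric MeasureTheory Set

section Geometry

variable {E : Type*} [NormedAddCommGroup E] [NormedSpace ℝ E]

theorem Convex.ball_add_smul_sub_subset {Ω : Set E} (hΩ : Convex ℝ Ω) {p y : E} {R t : ℝ}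
    (hball : ball p R ⊆ Ω) (hy : y ∈ Ω) (ht0 : 0 ≤ t) (ht1 : t ≤ 1) :
    ball (p + t • (y - p)) ((1 - t) * R) ⊆ Ω := by
  intro z hz
  obtain rfl | ht1 := ht1.eq_or_lt
  · simp at hz
  have h1t : 0 < 1 - t := sub_pos.2 ht1
  have hw : p + (1 - t)⁻¹ • (z - (p + t • (y - p))) ∈ ball p R := by
    rwa [mem_ball, dist_self_add_left, norm_smul, norm_inv, Real.norm_of_nonneg h1t.le,
      ← dist_eq_norm, inv_mul_lt_iff₀ h1t]
  convert hΩ (hball hw) hy h1t.le ht0 (by ring) using 1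
  rw [smul_add, smul_inv_smul₀ h1t.ne']
  module

theorem le_infDist_frontier_of_ball_subset {X : Type*} [PseudoMetricSpace X] {Ω : Set X}
    {x : X} {r : ℝ} (hne : (frontier Ω).Nonempty) (h : ball x r ⊆ Ω) :
    r ≤ infDist x (frontier Ω) :=
  (le_infDist hne).2 fun _ hy =>
    not_lt.1 fun hxy => hy.2 (interior_maximal h isOpen_ball (mem_ball'.2 hxy))

theorem Convex.mul_div_sub_infDist_mem_upperBounds {Ω : Set E} (hΩ : Convex ℝ Ω) {p v : E}
    {R ρ : ℝ} (hball : ball p R ⊆ Ω) (hne : (frontier Ω).Nonempty) (hρ : 0 ≤ ρ)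
    (hdR : infDist (p + ρ • v) (frontier Ω) < R) :
    ρ * R / (R - infDist (p + ρ • v) (frontier Ω)) ∈ upperBounds {ρ' | p + ρ' • v ∈ Ω} := by
  set d := infDist (p + ρ • v) (frontier Ω)
  have hd : 0 ≤ d := infDist_nonneg
  intro ρ' hρ'
  rw [le_div_iff₀ (sub_pos.2 hdR)]
  rcases le_or_gt ρ' ρ with hle | hlt
  · nlinarith
  have hρ'0 : 0 < ρ' := hρ.trans_lt hlt
  have hcone := hΩ.ball_add_smul_sub_subset hball hρ' (div_nonneg hρ hρ'0.le)
    ((div_le_one hρ'0).2 hlt.le)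
  rw [add_sub_cancel_left, smul_smul, div_mul_cancel₀ ρ hρ'0.ne'] at hcone
  calc ρ' * (R - d) ≤ ρ' * (R - (1 - ρ / ρ') * R) := by
        gcongr; exact le_infDist_frontier_of_ball_subset hne hcone
    _ = ρ * R := by field_simp; ring

theorem Convex.exists_exit_dichotomy {Ω : Set E} (hΩ : Convex ℝ Ω) (hΩo : IsOpen Ω) {p v : E}
    {R : ℝ} (hR : 0 < R) (hball : ball p R ⊆ Ω) (hv : ‖v‖ ≤ 1) :
    ∃ ρ₀, R ≤ ρ₀ ∧ ∀ ρ, 0 ≤ ρ → p + ρ • v ∈ Ω →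
      -- `d = 0` is the junk value `infDist x ∅`, for an empty frontier
      (R / 2 ≤ infDist (p + ρ • v) (frontier Ω) ∨ infDist (p + ρ • v) (frontier Ω) = 0) ∨
      (ρ ∈ Ioo (ρ₀ / 2) ρ₀ ∧ R - R / ρ₀ * ρ ≤ infDist (p + ρ • v) (frontier Ω)) := by
  set S := {ρ : ℝ | p + ρ • v ∈ Ω}
  rcases (frontier Ω).eq_empty_or_nonempty with hempty | hne
  · exact ⟨R, le_rfl, fun ρ _ _ => Or.inl (Or.inr (by rw [hempty, infDist_empty]))⟩
  by_cases hbdd : BddAbove S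
  swap
  · refine ⟨R, le_rfl, fun ρ hρ _ => Or.inl (Or.inl ?_)⟩
    by_contra! hd
    exact hbdd ⟨_, hΩ.mul_div_sub_infDist_mem_upperBounds hball hne hρ (by linarith)⟩
  have hIco : Ico 0 R ⊆ S := fun ρ hρ => hball <| by
    rw [mem_ball, dist_self_add_left, norm_smul, Real.norm_of_nonneg hρ.1]
    exact (mul_le_of_le_one_right hρ.1 hv).trans_lt hρ.2
  have hRρ₀ : R ≤ sSup S := (csSup_Ico hR).ge.trans (csSup_le_csSup hbdd ⟨0, le_rfl, hR⟩ hIco)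
  have hρ₀ : 0 < sSup S := hR.trans_le hRρ₀
  refine ⟨sSup S, hRρ₀, fun ρ hρ hρS => ?_⟩
  set d := infDist (p + ρ • v) (frontier Ω)
  have hexit : ρ < sSup S := by
    have hSo : IsOpen S := hΩo.preimage (by fun_prop)
    obtain ⟨ρ', hρρ', hρ'S⟩ :=
      Filter.nonempty_of_mem (inter_mem_nhdsWithin (Ioi ρ) (hSo.mem_nhds hρS))
    exact hρρ'.trans_le (le_csSup hbdd hρ'S)
  have hkey : sSup S * (R - d) ≤ ρ * R := by
    rcases le_or_gt R d with hRd | hdR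
    · nlinarith
    · rw [← le_div_iff₀ (sub_pos.2 hdR)]
      exact csSup_le ⟨0, hIco ⟨le_rfl, hR⟩⟩
        (hΩ.mul_div_sub_infDist_mem_upperBounds hball hne hρ hdR)
  rcases le_or_gt ρ (sSup S / 2) with hhalf | hhalf
  · left; left; nlinarith
  · right
    refine ⟨⟨hhalf, hexit⟩, ?_⟩
    rw [div_mul_eq_mul_div, sub_le_comm, le_div_iff₀ hρ₀]
    linarith

end Geometry

theorem one_div_rpow_mul_rpow_le {d L r ρ e κ : ℝ} (he : 0 ≤ e) (hκ : 0 ≤ κ) (hL : 0 < L)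
    (hr : 0 < r) (hrρ : r ≤ ρ) (hd : L ≤ d ∨ d = 0) :
    1 / (d ^ e * ρ ^ κ) ≤ L ^ (-e) * r ^ (-κ) := by
  rw [Real.rpow_neg hL.le, Real.rpow_neg hr.le, ← mul_inv, ← one_div]
  have hrκ : r ^ κ ≤ ρ ^ κ := Real.rpow_le_rpow hr.le hrρ hκ
  rcases hd with hLd | rfl
  · have := Real.rpow_nonneg (hL.le.trans hLd) e
    gcongr
  -- `0 ^ e` is `1` or `0`; in the latter case the left-hand side is the junk value `1 / 0 = 0`
  rcases he.eq_or_lt with rfl | he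
  · simpa using inv_anti₀ (by positivity) hrκ
  · simp only [Real.zero_rpow he.ne', zero_mul, div_zero]
    positivity

noncomputable def nearExitBound (e κ R ρ₀ ρ : ℝ) : ℝ :=
  (R - R / ρ₀ * ρ) ^ (-e) * (ρ₀ / 2) ^ (-κ)

noncomputable def rayMajorant (e κ R ρ₀ ρ : ℝ) : ℝ :=
  (R / 2) ^ (-e) * ρ ^ (-κ) + (Ioc (ρ₀ / 2) ρ₀).indicator (nearExitBound e κ R ρ₀) ρ

theorem indicator_nearExit_nonneg {e κ R ρ₀ : ℝ} (hR : 0 ≤ R) (ρ : ℝ) :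
    0 ≤ (Ioc (ρ₀ / 2) ρ₀).indicator (nearExitBound e κ R ρ₀) ρ := by
  refine indicator_nonneg (fun ρ hρ => ?_) ρ
  have hρ₀ : 0 < ρ₀ := by linarith [hρ.1, hρ.2]
  have : R / ρ₀ * ρ ≤ R := by
    rw [div_mul_eq_mul_div, div_le_iff₀ hρ₀]; exact mul_le_mul_of_nonneg_left hρ.2 hR
  have : 0 ≤ R - R / ρ₀ * ρ := by linarith
  unfold nearExitBound
  positivity

theorem indicator_div_le_rayMajorant {X : Type*} {Ω : Set X} {x : X} {d e κ R ρ₀ ρ : ℝ}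
    (he : 0 ≤ e) (hκ : 0 ≤ κ) (hR : 0 < R) (hρ : 0 < ρ)
    (h : x ∈ Ω → (R / 2 ≤ d ∨ d = 0) ∨ (ρ ∈ Ioo (ρ₀ / 2) ρ₀ ∧ R - R / ρ₀ * ρ ≤ d)) :
    Ω.indicator (fun _ => (1 : ℝ)) x / (d ^ e * ρ ^ κ) ≤ rayMajorant e κ R ρ₀ ρ := by
  have hnear := indicator_nearExit_nonneg (e := e) (κ := κ) (ρ₀ := ρ₀) hR.le ρ
  have hfar : 0 ≤ (R / 2) ^ (-e) * ρ ^ (-κ) := by positivity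
  by_cases hx : x ∈ Ω
  · rw [indicator_of_mem hx]
    rcases h hx with hd | ⟨hρ', hd⟩
    · exact le_add_of_le_of_nonneg
        (one_div_rpow_mul_rpow_le he hκ (half_pos hR) hρ le_rfl hd) hnear
    · have hρ₀ : 0 < ρ₀ := by linarith [hρ'.1, hρ'.2]
      have hL : 0 < R - R / ρ₀ * ρ := by
        rw [sub_pos, div_mul_eq_mul_div, div_lt_iff₀ hρ₀]
        exact mul_lt_mul_of_pos_left hρ'.2 hR
      rw [rayMajorant, indicator_of_mem (Ioo_subset_Ioc_self hρ')]
      exact le_add_of_nonneg_of_le hfar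
        (one_div_rpow_mul_rpow_le he hκ hL (half_pos hρ₀) hρ'.1.le (Or.inl hd))
  · rw [indicator_of_notMem hx, zero_div]
    exact add_nonneg hfar hnear

theorem half_rpow_mul_rpow_le {R X e κ : ℝ} (hR : 0 < R) (hX : R / 2 ≤ X) (hκ : 1 ≤ κ) :
    (R / 2) ^ (-e) * X ^ (1 - κ) ≤ (R / 2) ^ (1 - e - κ) := by
  rw [show 1 - e - κ = -e + (1 - κ) by ring, Real.rpow_add (half_pos hR)]
  exact mul_le_mul_of_nonneg_left
    (Real.rpow_le_rpow_of_nonpos (half_pos hR) hX (by linarith)) (by positivity)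

theorem intervalIntegral_sub_mul_rpow {e R ρ₀ : ℝ} (he : e < 1) (hR : R ≠ 0) (hρ₀ : ρ₀ ≠ 0) :
    ∫ ρ in (ρ₀ / 2)..ρ₀, (R - R / ρ₀ * ρ) ^ (-e) = ρ₀ / 2 * (R / 2) ^ (-e) / (1 - e) := by
  rw [intervalIntegral.integral_comp_sub_mul (fun u => u ^ (-e)) (div_ne_zero hR hρ₀),
    integral_rpow (Or.inl (by linarith)), show R - R / ρ₀ * ρ₀ = 0 by field_simp; ring,
    show R - R / ρ₀ * (ρ₀ / 2) = R / 2 by field_simp; ring,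
    Real.zero_rpow (by linarith), sub_zero, Real.rpow_add_one (by positivity), smul_eq_mul]
  field_simp
  ring

theorem integrable_indicator_nearExit {e κ R ρ₀ : ℝ} (he : e < 1) (hR : 0 < R) (hρ₀ : 0 < ρ₀) :
    Integrable ((Ioc (ρ₀ / 2) ρ₀).indicator (nearExitBound e κ R ρ₀)) := by
  have h1e : 0 < 1 - e := by linarith
  have hint : IntervalIntegrable (fun ρ => (R - R / ρ₀ * ρ) ^ (-e)) volume (ρ₀ / 2) ρ₀ :=
    intervalIntegral.intervalIntegrable_of_integral_ne_zero <| by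
      rw [intervalIntegral_sub_mul_rpow he hR.ne' hρ₀.ne']
      positivity
  rw [integrable_indicator_iff measurableSet_Ioc,
    ← intervalIntegrable_iff_integrableOn_Ioc_of_le (by linarith)]
  exact hint.mul_const _

theorem integrableOn_Ioi_rayMajorant {e κ R ρ₀ : ℝ} (he : e < 1) (hκ : 1 < κ) (hR : 0 < R)
    (hRρ₀ : R ≤ ρ₀) : IntegrableOn (rayMajorant e κ R ρ₀) (Ioi R) :=
  ((integrableOn_Ioi_rpow_of_lt (by linarith) hR).const_mul _).add
    (integrable_indicator_nearExit he hR (hR.trans_le hRρ₀)).integrableOn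

theorem setIntegral_Ioi_rayMajorant_le {e κ R ρ₀ : ℝ} (he : e < 1) (hκ : 1 < κ) (hR : 0 < R)
    (hRρ₀ : R ≤ ρ₀) :
    ∫ ρ in Ioi R, rayMajorant e κ R ρ₀ ρ ≤ (1 / (κ - 1) + 1 / (1 - e)) * (R / 2) ^ (1 - e - κ) := by
  have hρ₀ : 0 < ρ₀ := hR.trans_le hRρ₀
  have hnear := integrable_indicator_nearExit (κ := κ) he hR hρ₀
  have hfar_le : ∫ ρ in Ioi R, (R / 2) ^ (-e) * ρ ^ (-κ) ≤ (R / 2) ^ (1 - e - κ) / (κ - 1) := by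
    rw [integral_const_mul, integral_Ioi_rpow_of_lt (by linarith) hR,
      show -κ + 1 = 1 - κ by ring, neg_div, ← div_neg, neg_sub, ← mul_div_assoc]
    exact div_le_div_of_nonneg_right (half_rpow_mul_rpow_le hR (half_le_self hR.le) hκ.le)
      (by linarith)
  have hnear_le : ∫ ρ in Ioi R, (Ioc (ρ₀ / 2) ρ₀).indicator (nearExitBound e κ R ρ₀) ρ ≤
      (R / 2) ^ (1 - e - κ) / (1 - e) := by
    calc _ ≤ ∫ ρ, (Ioc (ρ₀ / 2) ρ₀).indicator (nearExitBound e κ R ρ₀) ρ :=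
          setIntegral_le_integral hnear (.of_forall (indicator_nearExit_nonneg hR.le))
      _ = (R / 2) ^ (-e) * (ρ₀ / 2) ^ (1 - κ) / (1 - e) := by
          rw [integral_indicator measurableSet_Ioc, ← intervalIntegral.integral_of_le (by linarith)]
          unfold nearExitBound
          rw [intervalIntegral.integral_mul_const, intervalIntegral_sub_mul_rpow he hR.ne' hρ₀.ne',
            show 1 - κ = -κ + 1 by ring, Real.rpow_add_one (by positivity)]
          ring
      _ ≤ _ := div_le_div_of_nonneg_right (half_rpow_mul_rpow_le hR (by linarith) hκ.le)
          (by linarith)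
  unfold rayMajorant
  rw [integral_add ((integrableOn_Ioi_rpow_of_lt (by linarith) hR).const_mul _) hnear.integrableOn]
  calc _ ≤ (R / 2) ^ (1 - e - κ) / (κ - 1) + (R / 2) ^ (1 - e - κ) / (1 - e) :=
        add_le_add hfar_le hnear_le
    _ = _ := by ring

theorem convex_weighted_line_integral
    (n : ℕ) (s α : ℝ) (hs : s ∈ Set.Ioo (0 : ℝ) 1)
    (hα : α ∈ Set.Ico s (1 + s)) :
    ∃ C > 0, ∀ (Ω : Set (EuclideanSpace ℝ (Fin n)))
      (p ω : EuclideanSpace ℝ (Fin n)) (R : ℝ),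
      Convex ℝ Ω → IsOpen Ω → 0 < R → ‖ω‖ = 1 →
      Metric.ball p R ⊆ Ω →
      (∫ ρ in Set.Ioi R,
          Set.indicator Ω (fun _ => (1 : ℝ)) (p + ρ • ω) /
            ((Metric.infDist (p + ρ • ω) (frontier Ω)) ^ (α - s) *
              ρ ^ (1 + 2 * s)))
        ≤ C * R ^ (-s - α) := by
  obtain ⟨hs0, -⟩ := hs
  obtain ⟨hαs, hα1⟩ := hα
  have hC : 0 < 1 / (2 * s) + 1 / (1 + s - α) :=
    add_pos (one_div_pos.2 (by linarith)) (one_div_pos.2 (by linarith))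
  refine ⟨(1 / (2 * s) + 1 / (1 + s - α)) / 2 ^ (-s - α), div_pos hC (by positivity), ?_⟩
  intro Ω p ω R hΩ hΩo hR hω hball
  obtain ⟨ρ₀, hRρ₀, hexit⟩ := hΩ.exists_exit_dichotomy hΩo hR hball hω.le
  calc _ ≤ ∫ ρ in Ioi R, rayMajorant (α - s) (1 + 2 * s) R ρ₀ ρ := by
        refine integral_mono_of_nonneg ?_
          (integrableOn_Ioi_rayMajorant (by linarith) (by linarith) hR hRρ₀) ?_ <;>
          filter_upwards [ae_restrict_mem measurableSet_Ioi] with ρ (hρ : R < ρ)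
        · exact div_nonneg (indicator_nonneg (fun _ _ => zero_le_one) _) (mul_nonneg
            (Real.rpow_nonneg infDist_nonneg _) (Real.rpow_nonneg (hR.trans hρ).le _))
        · exact indicator_div_le_rayMajorant (by linarith) (by linarith) hR (hR.trans hρ)
            (hexit ρ (hR.trans hρ).le)
    _ ≤ (1 / (1 + 2 * s - 1) + 1 / (1 - (α - s))) * (R / 2) ^ (1 - (α - s) - (1 + 2 * s)) :=
        setIntegral_Ioi_rayMajorant_le (by linarith) (by linarith) hR hRρ₀
    _ = _ := by
        rw [show 1 - (α - s) - (1 + 2 * s) = -s - α by ring, Real.div_rpow hR.le zero_le_two]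
        ring
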